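/- arXiv:2412.10884 — 8 statements merged into one kernel-verified Lean document; each statement's English description precedes it below -/
import Mathlib

section
/- Let S = {s_1, …, s_t} be a finite set of integers with 1 < s_1 < s_2 < … < s_t and gcd(s_1, …, s_t) = 1. Then the set of representable integers k that are not greedy-representable is infinite. (In fact, for any gap g of the numerical semigroup ⟨S⟩, all sufficiently large elements of the arithmetic progression {g + j·s_t : j ∈ ℕ} are representable but not greedy-representable.) -/
open Finset

/-- `a` is a representation of `k` with respect to the denominations `s`:
a vector of nonnegative integers with `∑ i, a i * s i = k`. -/
def IsRep {t : ℕ} (s : Fin t → ℕ) (k : ℕ) (a : Fin t → ℕ) : Prop :=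
  ∑ i, a i * s i = k

/-- `k` is representable with respect to `s`. -/
def Representable {t : ℕ} (s : Fin t → ℕ) (k : ℕ) : Prop :=
  ∃ a, IsRep s k a

/-- `MinCost_S(k)`: the minimum cost `∑ i, a i` over all representations `a` of `k`. -/
noncomputable def minCost {t : ℕ} (s : Fin t → ℕ) (k : ℕ) : ℕ :=
  sInf {c | ∃ a, IsRep s k a ∧ ∑ i, a i = c}

/-- `a` is the greedy representation of `k`: the representation whose reversed vector
`(a_t, …, a_1)` is greatest in lexicographic order among the reversed vectors of all
representations of `k`. -/
def IsGreedyRep {t : ℕ} (s : Fin t → ℕ) (k : ℕ) (a : Fin t → ℕ) : Prop :=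
  IsRep s k a ∧
    ∀ b, IsRep s k b → b = a ∨ ∃ i, b i < a i ∧ ∀ j, i < j → b j = a j

/-- `GreedyCost_S(k)`: the cost of the greedy representation of `k`
(the greedy representation is unique when it exists). -/
noncomputable def greedyCost {t : ℕ} (s : Fin t → ℕ) (k : ℕ) : ℕ :=
  sInf {c | ∃ a, IsGreedyRep s k a ∧ ∑ i, a i = c}

/-- The final remainder `r_0` of the naive greedy algorithm: for `i = t` down to `1`,
replace the current remainder `r` by `r % s_i`. -/
def greedyRem {t : ℕ} (s : Fin t → ℕ) (k : ℕ) : ℕ :=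
  ((List.ofFn s).reverse).foldl (· % ·) k

/-- A counterexample for `S`: a representable `k > 0` with `MinCost_S(k) < GreedyCost_S(k)`. -/
def IsCounterexample {t : ℕ} (s : Fin t → ℕ) (k : ℕ) : Prop :=
  0 < k ∧ Representable s k ∧ minCost s k < greedyCost s k

/-- A witness for `S`: a representable `k > 0` such that for some generator `s i` with
`k - s i` nonnegative and representable, `GreedyCost_S(k) > GreedyCost_S(k - s i) + 1`. -/
def IsWitness {t : ℕ} (s : Fin t → ℕ) (k : ℕ) : Prop :=
  0 < k ∧ Representable s k ∧ ∃ i : Fin t, s i ≤ k ∧ Representable s (k - s i) ∧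
    greedyCost s (k - s i) + 1 < greedyCost s k

/-!
The naive greedy algorithm starts by reducing modulo `s_t`, so `g` and `g + j * s_t` have the same
final remainder; and whenever that remainder is `0`, the quotients collected along the way form a
representation. Hence `g + j * s_t` is never greedy-representable when `g` is a gap. On the other
hand, since `gcd S = 1`, every sufficiently large integer lies in `⟨S⟩`, so `g + j * s_t` is
representable for large `j`. As `1` is a gap, this gives infinitely many such integers.
-/

theorem representable_iff_mem_closure {t : ℕ} (s : Fin t → ℕ) (k : ℕ) :
    Representable s k ↔ k ∈ AddSubmonoid.closure (Set.range s) := by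
  simp [AddSubmonoid.mem_closure_range_iff_of_fintype, Representable, IsRep, eq_comm]

theorem List.foldl_mod_add_mem_closure (l : List ℕ) (k : ℕ) :
    ∃ m ∈ AddSubmonoid.closure {x | x ∈ l}, l.foldl (· % ·) k + m = k := by
  induction l generalizing k with
  | nil => exact ⟨0, zero_mem _, rfl⟩
  | cons a l ih =>
    obtain ⟨m, hm, hsum⟩ := ih (k % a)
    have hm' : m ∈ AddSubmonoid.closure {x | x ∈ a :: l} :=
      AddSubmonoid.closure_mono (fun x hx => List.mem_cons_of_mem a hx) hm
    have ha : (k / a) • a ∈ AddSubmonoid.closure {x | x ∈ a :: l} :=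
      nsmul_mem (AddSubmonoid.subset_closure (show a ∈ {x | x ∈ a :: l} from mem_cons_self)) _
    refine ⟨m + (k / a) • a, add_mem hm' ha, ?_⟩
    rw [List.foldl_cons, smul_eq_mul, ← add_assoc, hsum, Nat.mod_add_div']

theorem representable_of_greedyRem_eq_zero {t : ℕ} (s : Fin t → ℕ) {k : ℕ}
    (h : greedyRem s k = 0) : Representable s k := by
  obtain ⟨m, hm, hsum⟩ := List.foldl_mod_add_mem_closure (List.ofFn s).reverse k
  have hset : {x | x ∈ (List.ofFn s).reverse} = Set.range s := by
    ext x
    simp [List.mem_ofFn]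
  rw [greedyRem] at h
  rw [representable_iff_mem_closure, ← hsum, h, zero_add, ← hset]
  exact hm

theorem greedyRem_add_mul_last {n : ℕ} (s : Fin (n + 1) → ℕ) (k j : ℕ) :
    greedyRem s (k + j * s (Fin.last n)) = greedyRem s k := by
  rw [greedyRem, greedyRem, List.ofFn_succ', List.concat_eq_append, List.reverse_append]
  simp [Nat.add_mul_mod_self_right]

theorem greedyRem_add_mul_last_ne_zero {n : ℕ} (s : Fin (n + 1) → ℕ) {g : ℕ}
    (hg : ¬ Representable s g) (j : ℕ) : greedyRem s (g + j * s (Fin.last n)) ≠ 0 := by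
  rw [greedyRem_add_mul_last]
  exact mt (representable_of_greedyRem_eq_zero s) hg

theorem exists_forall_ge_representable {t : ℕ} (s : Fin t → ℕ) (hgcd : univ.gcd s = 1) :
    ∃ N, ∀ k ≥ N, Representable s k := by
  have hdvd : Nat.setGcd (Set.range s) ∣ 1 := by
    rw [← hgcd]
    exact Finset.dvd_gcd fun i _ => Nat.setGcd_dvd_of_mem (Set.mem_range_self i)
  obtain ⟨N, hN⟩ := Nat.exists_mem_closure_of_ge (Set.range s)
  exact ⟨N, fun k hk => (representable_iff_mem_closure s k).2 (hN k hk (hdvd.trans (one_dvd k)))⟩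

theorem not_representable_one {t : ℕ} (s : Fin t → ℕ) (hs : ∀ i, 1 < s i) :
    ¬ Representable s 1 := by
  have h : ∀ k ∈ AddSubmonoid.closure (Set.range s), k = 0 ∨ 2 ≤ k := by
    intro k hk
    induction hk using AddSubmonoid.closure_induction with
    | mem x hx =>
      obtain ⟨i, rfl⟩ := hx
      exact Or.inr (hs i)
    | zero => exact Or.inl rfl
    | add x y _ _ hx hy => omega
  rw [representable_iff_mem_closure]
  intro h1
  simpa using h 1 h1

/-- The set of representable integers that are not greedy-representable is infinite;
in fact, for any gap `g` of `⟨S⟩`, all sufficiently large elements of the progression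
`{g + j * s_t : j ∈ ℕ}` are representable but not greedy-representable. -/
theorem representable_not_greedyRepresentable_infinite {t : ℕ} (ht : 0 < t)
    (s : Fin t → ℕ) (hmono : StrictMono s) (hone : 1 < s ⟨0, ht⟩)
    (hgcd : Finset.univ.gcd s = 1) :
    {k : ℕ | Representable s k ∧ greedyRem s k ≠ 0}.Infinite ∧
    ∀ g : ℕ, ¬ Representable s g →
      ∃ N : ℕ, ∀ j : ℕ, N ≤ j →
        Representable s (g + j * s ⟨t - 1, by omega⟩) ∧
        greedyRem s (g + j * s ⟨t - 1, by omega⟩) ≠ 0 := by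
  obtain ⟨n, rfl⟩ : ∃ n, t = n + 1 := ⟨t - 1, by omega⟩
  have hs : ∀ i, 1 < s i := fun i => hone.trans_le (hmono.monotone (Fin.zero_le i))
  obtain ⟨N, hN⟩ := exists_forall_ge_representable s hgcd
  have hprog : ∀ g, ¬ Representable s g → ∀ j, N ≤ j →
      Representable s (g + j * s (Fin.last n)) ∧ greedyRem s (g + j * s (Fin.last n)) ≠ 0 :=
    fun g hg j hj =>
      ⟨hN _ (by nlinarith [hs (Fin.last n)]), greedyRem_add_mul_last_ne_zero s hg j⟩
  refine ⟨Set.infinite_of_forall_exists_gt fun a => ?_, fun g hg => ⟨N, hprog g hg⟩⟩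
  exact ⟨1 + (N + a) * s (Fin.last n), hprog 1 (not_representable_one s hs) _ (by omega),
    by nlinarith [hs (Fin.last n)]⟩
end

section
/- Let S = {s_1, s_2} with 1 < s_1 < s_2 and gcd(s_1, s_2) = 1. Then S is greedy: for every representable k > 0, GreedyCost_S(k) = MinCost_S(k). -/
open Finset

/-- Any set `S = {s₁, s₂}` with `1 < s₁ < s₂` and `gcd(s₁, s₂) = 1` is greedy. -/
theorem two_generators_greedy (s : Fin 2 → ℕ) (hmono : StrictMono s)
    (hone : 1 < s 0) (hcop : Nat.Coprime (s 0) (s 1))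
    (k : ℕ) (hk : 0 < k) (hrep : Representable s k) :
    greedyCost s k = minCost s k := by

  have hs0 : 0 < s 0 := lt_trans one_pos hone
  have hs01 : s 0 < s 1 := hmono (by norm_num)
  obtain ⟨a, ha⟩ := hrep
  have ha' : a 0 * s 0 + a 1 * s 1 = k := by
    simpa [IsRep, Fin.sum_univ_two] using ha
  set A : Set ℕ := {n | ∃ m, m * s 0 + n * s 1 = k} with hA
  have hAne : A.Nonempty := ⟨a 1, a 0, ha'⟩
  have hAbd : BddAbove A := by
    refine ⟨k, fun n hn => ?_⟩
    obtain ⟨m, hm⟩ := hn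
    calc n ≤ n * s 1 := Nat.le_mul_of_pos_right n (by omega)
    _ ≤ k := by omega
  set N := sSup A with hNdef
  obtain ⟨m, hm⟩ : N ∈ A := Nat.sSup_mem hAne hAbd
  have hmax : ∀ n ∈ A, n ≤ N := fun n hn => le_csSup hAbd hn
  -- key facts about any representation b
  have key : ∀ b : Fin 2 → ℕ, IsRep s k b →
      b 1 ≤ N ∧ m + N ≤ b 0 + b 1 ∧ (b 1 = N → b = ![m, N]) := by
    intro b hb
    have hb' : b 0 * s 0 + b 1 * s 1 = k := by
      simpa [IsRep, Fin.sum_univ_two] using hb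
    have hb1 : b 1 ≤ N := hmax _ ⟨b 0, hb'⟩
    have heq : b 0 * s 0 = m * s 0 + (N - b 1) * s 1 := by
      have h1 := Nat.sub_mul N (b 1) (s 1)
      have h2 : b 1 * s 1 ≤ N * s 1 := Nat.mul_le_mul_right _ hb1
      omega
    have hmb : m ≤ b 0 := by
      by_contra h
      push_neg at h
      have : b 0 * s 0 < m * s 0 := (Nat.mul_lt_mul_right hs0).2 h
      omega
    have heq2 : (b 0 - m) * s 0 = (N - b 1) * s 1 := by
      have := Nat.sub_mul (b 0) m (s 0)
      omega
    have hdvd : s 0 ∣ (N - b 1) := by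
      have : s 0 ∣ (N - b 1) * s 1 := ⟨b 0 - m, by rw [← heq2]; ring⟩
      exact (Nat.Coprime.dvd_of_dvd_mul_right hcop this)
    obtain ⟨c, hc⟩ := hdvd
    have hc2 : b 0 - m = c * s 1 := by
      have h3 : (b 0 - m) * s 0 = (c * s 1) * s 0 := by
        rw [heq2, hc]; ring
      exact Nat.eq_of_mul_eq_mul_right hs0 h3
    have hcs : s 0 * c ≤ c * s 1 := by
      calc s 0 * c = c * s 0 := Nat.mul_comm _ _
      _ ≤ c * s 1 := Nat.mul_le_mul_left c (le_of_lt hs01)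
    refine ⟨hb1, by omega, ?_⟩
    intro h1
    have hc0 : c = 0 := by
      have : s 0 * c = 0 := by omega
      rcases Nat.mul_eq_zero.1 this with h | h
      · omega
      · exact h
    have hb0 : b 0 = m := by
      rw [hc0] at hc2; omega
    funext i
    fin_cases i
    · simpa using hb0
    · simpa using h1
  -- the greedy representation
  have hrepg : IsRep s k ![m, N] := by
    simp [IsRep, Fin.sum_univ_two]
    omega
  have hgreedy : IsGreedyRep s k ![m, N] := by
    refine ⟨hrepg, fun b hb => ?_⟩
    obtain ⟨hb1, _, hbeq⟩ := key b hb
    rcases eq_or_lt_of_le hb1 with h | h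
    · exact Or.inl (hbeq h)
    · refine Or.inr ⟨1, by simpa using h, fun j hj => ?_⟩
      exact absurd hj (by simp [Fin.lt_def]; omega)
  -- uniqueness of greedy representation
  have huniq : ∀ b, IsGreedyRep s k b → b = ![m, N] := by
    intro b hb
    obtain ⟨hbrep, hbmax⟩ := hb
    obtain ⟨hb1, _, hbeq⟩ := key b hbrep
    rcases eq_or_lt_of_le hb1 with h | h
    · exact hbeq h
    · exfalso
      rcases hbmax ![m, N] hrepg with heq | ⟨i, hi, hij⟩
      · have := congrFun heq 1
        simp at this
        omega
      · fin_cases i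
        · have := hij 1 (by simp [Fin.lt_def])
          simp at this
          omega
        · simp at hi
          omega
  have hsum : ∑ i, (![m, N] : Fin 2 → ℕ) i = m + N := by
    simp [Fin.sum_univ_two]
  -- compute greedyCost
  have hg : greedyCost s k = m + N := by
    have hmem : m + N ∈ {c | ∃ a, IsGreedyRep s k a ∧ ∑ i, a i = c} :=
      ⟨![m, N], hgreedy, hsum⟩
    refine le_antisymm (Nat.sInf_le hmem) (le_csInf ⟨_, hmem⟩ ?_)
    rintro c ⟨b, hb, rfl⟩
    rw [huniq b hb, hsum]
  -- compute minCost
  have hmin : minCost s k = m + N := by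
    have hmem : m + N ∈ {c | ∃ a, IsRep s k a ∧ ∑ i, a i = c} :=
      ⟨![m, N], hrepg, hsum⟩
    refine le_antisymm (Nat.sInf_le hmem) (le_csInf ⟨_, hmem⟩ ?_)
    rintro c ⟨b, hb, rfl⟩
    obtain ⟨_, h2, _⟩ := key b hb
    simpa [Fin.sum_univ_two] using h2
  rw [hg, hmin]
end

section
/- Let S = {s_1, …, s_t} be a finite set of integers with t ≥ 3, 1 < s_1 < s_2 < … < s_t, and gcd(s_1, …, s_t) = 1. Then every representable integer k with 0 < k < s_3 + s_1 + 2 satisfies MinCost_S(k) = GreedyCost_S(k); that is, there is no counterexample below s_3 + s_1 + 2. -/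
/-!
Let `g` be the greedy representation of `k` and `b` any other one. At the largest index `i` where
they differ, `b i < g i`, so the coins of `b` below `s i` are worth those of `g` below `s i` plus
`d = g i - b i` copies of `s i`; it suffices that `b` has at least `d` more coins below `s i`.
If only `s 0` lies below `s i`, this follows from `s 0 < s i`. Otherwise `s i ≥ s 2 ≥ s 0 + 2`, and
`k < s 2 + s 0 + 2` forces `d = 1` and leaves `g` at most one coin below `s i` (each is worth at
least `s 0 ≥ 2`), while `b` needs at least two coins smaller than `s i` to reach a value `≥ s i`.
-/

open Finset

theorem Finset.sum_univ_eq_sum_Iio_add_add_sum_Ioi {α M : Type*} [Fintype α] [LinearOrder α]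
    [LocallyFiniteOrderBot α] [LocallyFiniteOrderTop α] [AddCommMonoid M] (f : α → M) (i : α) :
    ∑ j, f j = ∑ j ∈ Iio i, f j + f i + ∑ j ∈ Ioi i, f j := by
  rw [sum_Iio_add_eq_sum_Iic, ← sum_filter_add_sum_filter_not univ (· ≤ i), filter_ge_eq_Iic]
  simp only [not_le, filter_lt_eq_Ioi]

theorem Nat.add_le_of_mul_eq_add_mul {a b x y d : ℕ} (ha : 0 < a) (hab : a ≤ b)
    (h : y * a = x * a + d * b) : x + d ≤ y :=
  Nat.le_of_mul_le_mul_right (by rw [add_mul, h]; gcongr) ha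

theorem Finset.sum_add_le_sum_of_sum_mul_eq_add_mul {ι : Type*} {A : Finset ι} {s x y : ι → ℕ}
    {m S d : ℕ} (hm : 2 ≤ m) (hmS : m + 2 ≤ S) (hs : ∀ j ∈ A, m ≤ s j ∧ s j < S) (hd : 0 < d)
    (hval : ∑ j ∈ A, y j * s j = ∑ j ∈ A, x j * s j + d * S)
    (hsmall : ∑ j ∈ A, y j * s j < S + m + 2) :
    ∑ j ∈ A, x j + d ≤ ∑ j ∈ A, y j := by
  have hx : (∑ j ∈ A, x j) * m ≤ ∑ j ∈ A, x j * s j := by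
    rw [sum_mul]
    exact sum_le_sum fun j hj => Nat.mul_le_mul_left _ (hs j hj).1
  have hy : ∑ j ∈ A, y j * s j ≤ (∑ j ∈ A, y j) * (S - 1) := by
    rw [sum_mul]
    exact sum_le_sum fun j hj => Nat.mul_le_mul_left _ (by have := hs j hj; omega)
  obtain rfl : d = 1 := by
    by_contra hd1
    have : 2 * S ≤ d * S := Nat.mul_le_mul_right _ (by omega)
    omega
  have hx1 : ∑ j ∈ A, x j ≤ 1 := by
    by_contra hx1
    have : 2 * m ≤ (∑ j ∈ A, x j) * m := Nat.mul_le_mul_right _ (by omega)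
    omega
  have hy2 : 2 ≤ ∑ j ∈ A, y j := by
    by_contra hy2
    have : (∑ j ∈ A, y j) * (S - 1) ≤ 1 * (S - 1) := Nat.mul_le_mul_right _ (by omega)
    omega
  omega

section Representation

variable {t : ℕ} {s : Fin t → ℕ} {k : ℕ}

theorem IsRep.apply_le (hs : ∀ i, 0 < s i) {a : Fin t → ℕ} (ha : IsRep s k a) (j : Fin t) :
    a j ≤ k :=
  calc a j ≤ a j * s j := Nat.le_mul_of_pos_right _ (hs j)
    _ ≤ k := ha ▸ single_le_sum (f := fun j => a j * s j) (fun _ _ => Nat.zero_le _) (mem_univ j)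

/-- The greedy representation is the colexicographic maximum of the finitely many
representations. -/
theorem exists_isGreedyRep (hs : ∀ i, 0 < s i) (hk : Representable s k) :
    ∃ g, IsGreedyRep s k g := by
  classical
  let F := (Fintype.piFinset fun _ : Fin t => range (k + 1)).filter (IsRep s k)
  have hF : ∀ a, a ∈ F ↔ IsRep s k a := fun a => by
    simpa [F, Nat.lt_succ_iff] using fun ha j => ha.apply_le hs j
  obtain ⟨a, ha⟩ := hk
  obtain ⟨g, hgF, hmax⟩ := F.exists_max_image toColex ⟨a, (hF a).2 ha⟩
  refine ⟨g, (hF g).1 hgF, fun b hb => ?_⟩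
  rcases (hmax b ((hF b).2 hb)).lt_or_eq with ⟨i, hup, hi⟩ | heq
  · exact Or.inr ⟨i, hi, hup⟩
  · exact Or.inl heq

theorem minCost_eq_greedyCost_of_forall_sum_le (hg : ∃ g, IsGreedyRep s k g)
    (hopt : ∀ g b, IsGreedyRep s k g → IsRep s k b → ∑ i, g i ≤ ∑ i, b i) :
    minCost s k = greedyCost s k := by
  obtain ⟨g₀, hg₀⟩ := hg
  obtain ⟨g, hg, hgc⟩ := Nat.sInf_mem (s := {c | ∃ a, IsGreedyRep s k a ∧ ∑ i, a i = c})
    ⟨_, g₀, hg₀, rfl⟩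
  obtain ⟨m, hm, hmc⟩ := Nat.sInf_mem (s := {c | ∃ a, IsRep s k a ∧ ∑ i, a i = c})
    ⟨_, g, hg.1, rfl⟩
  unfold minCost greedyCost
  rw [← hgc, ← hmc]
  exact le_antisymm (hmc ▸ Nat.sInf_le ⟨g, hg.1, rfl⟩) (hopt g m hg hm)

theorem IsRep.sum_Iio_mul_eq_add {a b : Fin t → ℕ} (ha : IsRep s k a) (hb : IsRep s k b)
    {i : Fin t} (hi : b i ≤ a i) (hup : ∀ j, i < j → b j = a j) :
    ∑ j ∈ Iio i, b j * s j = ∑ j ∈ Iio i, a j * s j + (a i - b i) * s i := by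
  have hupper : ∑ j ∈ Ioi i, b j * s j = ∑ j ∈ Ioi i, a j * s j :=
    sum_congr rfl fun j hj => by rw [hup j (mem_Ioi.1 hj)]
  have hai : a i * s i = b i * s i + (a i - b i) * s i := by rw [← add_mul, Nat.add_sub_cancel' hi]
  unfold IsRep at ha hb
  rw [sum_univ_eq_sum_Iio_add_add_sum_Ioi _ i] at ha hb
  omega

end Representation

theorem IsGreedyRep.sum_le_of_isRep {n k : ℕ} {s : Fin (n + 3) → ℕ} (hmono : StrictMono s)
    (hone : 1 < s 0) (hk : k < s 2 + s 0 + 2) {g b : Fin (n + 3) → ℕ} (hg : IsGreedyRep s k g)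
    (hb : IsRep s k b) : ∑ j, g j ≤ ∑ j, b j := by
  rcases hg.2 b hb with rfl | ⟨i, hlt, hup⟩
  · exact le_rfl
  have hval := hg.1.sum_Iio_mul_eq_add hb hlt.le hup
  have hcost : ∑ j ∈ Ioi i, b j = ∑ j ∈ Ioi i, g j :=
    sum_congr rfl fun j hj => hup j (mem_Ioi.1 hj)
  suffices ∑ j ∈ Iio i, g j + (g i - b i) ≤ ∑ j ∈ Iio i, b j by
    rw [sum_univ_eq_sum_Iio_add_add_sum_Ioi g i, sum_univ_eq_sum_Iio_add_add_sum_Ioi b i, hcost]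
    omega
  have hsmall : ∑ j ∈ Iio i, b j * s j ≤ k := by
    rw [← hb, sum_univ_eq_sum_Iio_add_add_sum_Ioi _ i, add_assoc]
    exact Nat.le_add_right _ _
  obtain rfl | rfl | h2i : i = 0 ∨ i = 1 ∨ 2 ≤ i := by
    rcases i with ⟨_ | _ | i, hi⟩
    · simp
    · simp
    · exact Or.inr (Or.inr (Fin.le_def.2 (Nat.le_add_left 2 i)))
  · have : Iio (0 : Fin (n + 3)) = ∅ := by ext j; simp
    simp only [this, sum_empty, zero_add] at hval
    exact absurd hval (Nat.mul_pos (Nat.sub_pos_of_lt hlt) (by omega)).ne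
  · have : Iio (1 : Fin (n + 3)) = {0} := by ext j; simp [Fin.lt_one_iff]
    simp only [this, sum_singleton] at hval ⊢
    exact Nat.add_le_of_mul_eq_add_mul (by omega) (hmono Fin.zero_lt_one).le hval
  · have h01 := hmono (show (0 : Fin (n + 3)) < 1 from Fin.zero_lt_one)
    have h12 := hmono (show (1 : Fin (n + 3)) < 2 from Fin.lt_def.2 Nat.one_lt_two)
    have h2i := hmono.monotone h2i
    exact sum_add_le_sum_of_sum_mul_eq_add_mul (m := s 0) hone (by omega)
      (fun j hj => ⟨hmono.monotone (Fin.zero_le j), hmono (mem_Iio.1 hj)⟩)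
      (Nat.sub_pos_of_lt hlt) hval (by omega)

/-- There is no counterexample below `s₃ + s₁ + 2`: every representable `k` with
`0 < k < s₃ + s₁ + 2` satisfies `MinCost_S(k) = GreedyCost_S(k)`. -/
theorem no_counterexample_below_lower_bound {t : ℕ} (ht : 3 ≤ t)
    (s : Fin t → ℕ) (hmono : StrictMono s) (hone : 1 < s ⟨0, by omega⟩)
    (k : ℕ) (hlt : k < s ⟨2, by omega⟩ + s ⟨0, by omega⟩ + 2)
    (hrep : Representable s k) :
    minCost s k = greedyCost s k := by
  obtain ⟨n, rfl⟩ : ∃ n, t = n + 3 := ⟨t - 3, by omega⟩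
  have hs : ∀ i, 0 < s i := fun i =>
    (Nat.zero_lt_one.trans hone).trans_le (hmono.monotone (Fin.zero_le i))
  exact minCost_eq_greedyCost_of_forall_sum_le (exists_isGreedyRep hs hrep)
    fun _ _ hg hb => hg.sum_le_of_isRep hmono hone hlt hb
end

section
/- For every odd integer j ≥ 7, the set S = {2, j, 2j−4} satisfies: k = 2j is a counterexample for S, i.e., MinCost_S(2j) = 2 while GreedyCost_S(2j) = 3; moreover 2j equals the lower bound s_3 + s_1 + 2 of the critical range, so the lower bound in the critical-range theorem is tight. -/
open Finset

lemma classify (j : ℕ) (hj : 7 ≤ j) (hodd : Odd j) (a : Fin 3 → ℕ)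
    (h : IsRep ![2, j, 2 * j - 4] (2 * j) a) :
    (a 0 = 2 ∧ a 1 = 0 ∧ a 2 = 1) ∨ (a 0 = 0 ∧ a 1 = 2 ∧ a 2 = 0) ∨
      (a 0 = j ∧ a 1 = 0 ∧ a 2 = 0) := by
  obtain ⟨m, hm⟩ := hodd
  simp only [IsRep, Fin.sum_univ_three, Matrix.cons_val_zero, Matrix.cons_val_one,
    Matrix.head_cons, Matrix.cons_val_two, Matrix.tail_cons] at h
  set x := a 0 with hx
  set y := a 1 with hy
  set z := a 2 with hz
  have hy2 : y ≤ 2 := by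
    by_contra hc
    push_neg at hc
    have : 3 * j ≤ y * j := Nat.mul_le_mul_right j hc
    omega
  have hz1 : z ≤ 1 := by
    by_contra hc
    push_neg at hc
    have : 2 * (2 * j - 4) ≤ z * (2 * j - 4) := Nat.mul_le_mul_right _ hc
    omega
  interval_cases y <;> interval_cases z <;> omega

lemma rep1 (j : ℕ) (hj : 7 ≤ j) : IsRep ![2, j, 2 * j - 4] (2 * j) ![2, 0, 1] := by
  simp only [IsRep, Fin.sum_univ_three, Matrix.cons_val_zero, Matrix.cons_val_one,
    Matrix.head_cons, Matrix.cons_val_two, Matrix.tail_cons]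
  omega

lemma rep2 (j : ℕ) : IsRep ![2, j, 2 * j - 4] (2 * j) ![0, 2, 0] := by
  simp only [IsRep, Fin.sum_univ_three, Matrix.cons_val_zero, Matrix.cons_val_one,
    Matrix.head_cons, Matrix.cons_val_two, Matrix.tail_cons]
  ring

lemma greedy1 (j : ℕ) (hj : 7 ≤ j) (hodd : Odd j) :
    IsGreedyRep ![2, j, 2 * j - 4] (2 * j) ![2, 0, 1] := by
  refine ⟨rep1 j hj, fun b hb => ?_⟩
  rcases classify j hj hodd b hb with ⟨h0, h1, h2⟩ | ⟨h0, h1, h2⟩ | ⟨h0, h1, h2⟩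
  · left
    funext i
    fin_cases i <;> simp [h0, h1, h2]
  · right
    refine ⟨2, by simp [h2], fun i hi => ?_⟩
    exact absurd hi (by fin_cases i <;> decide)
  · right
    refine ⟨2, by simp [h2], fun i hi => ?_⟩
    exact absurd hi (by fin_cases i <;> decide)

/-- For odd `j ≥ 7` and `S = {2, j, 2j - 4}`, the number `2j` is a counterexample:
`MinCost_S(2j) = 2` while `GreedyCost_S(2j) = 3`; moreover `2j` equals the lower bound
`s₃ + s₁ + 2` of the critical range, so the lower bound is tight. -/
theorem lower_bound_tight (j : ℕ) (hj : 7 ≤ j) (hodd : Odd j) :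
    minCost ![2, j, 2 * j - 4] (2 * j) = 2 ∧
    greedyCost ![2, j, 2 * j - 4] (2 * j) = 3 ∧
    2 * j = (2 * j - 4) + 2 + 2 := by
  refine ⟨?_, ?_, by omega⟩
  · have hmem : 2 ∈ {c | ∃ a, IsRep ![2, j, 2 * j - 4] (2 * j) a ∧ ∑ i, a i = c} :=
      ⟨![0, 2, 0], rep2 j, by simp [Fin.sum_univ_three]⟩
    refine le_antisymm (Nat.sInf_le hmem) ?_
    obtain ⟨a, ha, hsum⟩ := Nat.sInf_mem (⟨2, hmem⟩ :
      Set.Nonempty {c | ∃ a, IsRep ![2, j, 2 * j - 4] (2 * j) a ∧ ∑ i, a i = c})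
    unfold minCost
    rw [← hsum]
    simp only [Fin.sum_univ_three]
    rcases classify j hj hodd a ha with ⟨h0, h1, h2⟩ | ⟨h0, h1, h2⟩ | ⟨h0, h1, h2⟩ <;>
      clear hmem hsum ha <;> omega
  · have hmem : 3 ∈ {c | ∃ a, IsGreedyRep ![2, j, 2 * j - 4] (2 * j) a ∧ ∑ i, a i = c} :=
      ⟨![2, 0, 1], greedy1 j hj hodd, by simp [Fin.sum_univ_three]⟩
    refine le_antisymm (Nat.sInf_le hmem) ?_
    obtain ⟨a, ⟨ha, hmax⟩, hsum⟩ := Nat.sInf_mem (⟨3, hmem⟩ :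
      Set.Nonempty {c | ∃ a, IsGreedyRep ![2, j, 2 * j - 4] (2 * j) a ∧ ∑ i, a i = c})
    unfold greedyCost
    rw [← hsum]
    simp only [Fin.sum_univ_three]
    have hb := rep1 j hj
    rcases classify j hj hodd a ha with ⟨h0, h1, h2⟩ | ⟨h0, h1, h2⟩ | ⟨h0, h1, h2⟩
    · clear hmem hsum ha hmax hb
      omega
    all_goals {
      exfalso
      rcases hmax ![2, 0, 1] hb with heq | ⟨i, hlt, hgt⟩
      · have h := congrFun heq 2
        simp [h2] at h
      · fin_cases i
        · have h := hgt 2 (by decide)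
          simp [h2] at h
        · have h := hgt 2 (by decide)
          simp [h2] at h
        · simp [h2] at hlt
    }
end

section
/- Let j ≥ 6 be an even integer and S = {2, j, j+1}. For every odd integer k with 2j+3 ≤ k ≤ 3j−1, the greedy representation of k is k = 1·(j+1) + 1·j + ((k−2j−1)/2)·2, and MinCost_S(k) = GreedyCost_S(k) = (k−2j−1)/2 + 2. -/
open Finset

lemma rep_char (j k n p b0 b1 b2 : ℕ) (hj : 6 ≤ j) (hp : j = 2 * p)
    (hn : k = 2 * n + 1) (hlo : 2 * j + 3 ≤ k) (hhi : k ≤ 3 * j - 1)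
    (heq : b0 * 2 + b1 * j + b2 * (j + 1) = k) :
    (b0 = n - j ∧ b1 = 1 ∧ b2 = 1) ∨ (b0 = n - j + p ∧ b1 = 0 ∧ b2 = 1) := by
  have h2 : b2 * (j + 1) ≤ k := by linarith [Nat.zero_le (b0 * 2), Nat.zero_le (b1 * j)]
  have h1 : b1 * j ≤ k := by linarith [Nat.zero_le (b0 * 2), Nat.zero_le (b2 * (j + 1))]
  have hb2 : b2 ≤ 2 := by
    by_contra h
    push_neg at h
    have : 3 * (j + 1) ≤ b2 * (j + 1) := Nat.mul_le_mul_right _ h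
    omega
  have hb1 : b1 ≤ 2 := by
    by_contra h
    push_neg at h
    have : 3 * j ≤ b1 * j := Nat.mul_le_mul_right _ h
    omega
  interval_cases b1 <;> interval_cases b2 <;> omega

/-- For even `j ≥ 6`, `S = {2, j, j + 1}` and odd `k` with `2j + 3 ≤ k ≤ 3j - 1`, the
greedy representation of `k` is `k = ((k - 2j - 1)/2)·2 + 1·j + 1·(j + 1)` and
`MinCost_S(k) = GreedyCost_S(k) = (k - 2j - 1)/2 + 2`. -/
theorem odd_case_in_critical_range (j : ℕ) (hj : 6 ≤ j) (heven : Even j)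
    (k : ℕ) (hodd : Odd k) (hlo : 2 * j + 3 ≤ k) (hhi : k ≤ 3 * j - 1) :
    IsGreedyRep ![2, j, j + 1] k ![(k - (2 * j + 1)) / 2, 1, 1] ∧
    minCost ![2, j, j + 1] k = (k - (2 * j + 1)) / 2 + 2 ∧
    greedyCost ![2, j, j + 1] k = (k - (2 * j + 1)) / 2 + 2 := by
  obtain ⟨n, hn⟩ := hodd
  obtain ⟨p, hp⟩ := heven
  have hp' : j = 2 * p := by omega
  have hm : (k - (2 * j + 1)) / 2 = n - j := by omega
  have hnj : j + 1 ≤ n := by omega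
  have hpge : 3 ≤ p := by omega
  -- the representation equation for a general b
  have repEq : ∀ b : Fin 3 → ℕ, IsRep ![2, j, j + 1] k b ↔
      b 0 * 2 + b 1 * j + b 2 * (j + 1) = k := by
    intro b
    simp [IsRep, Fin.sum_univ_three]
  -- our candidate is a rep
  have hrep : IsRep ![2, j, j + 1] k ![(k - (2 * j + 1)) / 2, 1, 1] := by
    rw [repEq]
    simp [hm]
    omega
  have hchar : ∀ b : Fin 3 → ℕ, IsRep ![2, j, j + 1] k b →
      (b 0 = n - j ∧ b 1 = 1 ∧ b 2 = 1) ∨ (b 0 = n - j + p ∧ b 1 = 0 ∧ b 2 = 1) := by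
    intro b hb
    rw [repEq] at hb
    exact rep_char j k n p (b 0) (b 1) (b 2) hj hp' hn hlo hhi hb
  have hgreedy : IsGreedyRep ![2, j, j + 1] k ![(k - (2 * j + 1)) / 2, 1, 1] := by
    refine ⟨hrep, fun b hb => ?_⟩
    rcases hchar b hb with ⟨h0, h1, h2⟩ | ⟨h0, h1, h2⟩
    · left
      funext i
      fin_cases i <;> simp [h0, h1, h2, hm]
    · right
      refine ⟨1, by simp [h1], fun i hi => ?_⟩
      fin_cases i
      · exact absurd hi (by simp)
      · exact absurd hi (by simp)
      · simp [h2]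
  refine ⟨hgreedy, ?_, ?_⟩
  · -- minCost
    apply le_antisymm
    · apply Nat.sInf_le
      exact ⟨_, hrep, by simp [Fin.sum_univ_three]⟩
    · refine le_csInf ⟨(k - (2 * j + 1)) / 2 + 2, ⟨_, hrep, by simp [Fin.sum_univ_three]⟩⟩ ?_
      rintro c ⟨b, hb, hc⟩
      simp only [Fin.sum_univ_three] at hc
      rcases hchar b hb with ⟨h0, h1, h2⟩ | ⟨h0, h1, h2⟩ <;> omega
  · -- greedyCost
    apply le_antisymm
    · apply Nat.sInf_le
      exact ⟨_, hgreedy, by simp [Fin.sum_univ_three]⟩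
    · refine le_csInf ⟨(k - (2 * j + 1)) / 2 + 2, ⟨_, hgreedy, by simp [Fin.sum_univ_three]⟩⟩ ?_
      rintro c ⟨b, ⟨hbrep, hbmax⟩, hc⟩
      simp only [Fin.sum_univ_three] at hc
      rcases hchar b hbrep with ⟨h0, h1, h2⟩ | ⟨h0, h1, h2⟩
      · omega
      · -- b = (n-j+p, 0, 1) cannot be greedy: compare with our candidate
        exfalso
        rcases hbmax _ hrep with heq | ⟨i, hi, hall⟩
        · have := congrFun heq 1
          simp [h1] at this
        · have h2' := hall 2
          fin_cases i
          · have := h2' (by decide)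
            simp [hm, h2] at hi
            have h1' := hall 1 (by norm_num)
            simp [h1] at h1'
          · simp [h1] at hi
          · simp [h2] at hi
end

section
/- Let j ≥ 6 be an even integer and S = {2, j, j+1}. For every even integer k with 2j+4 ≤ k ≤ 3j−2, the greedy representation of k is k = 2·(j+1) + ((k−2j−2)/2)·2, and MinCost_S(k) = GreedyCost_S(k) = (k−2j−2)/2 + 2. -/
open Finset

/-- For even `j ≥ 6`, `S = {2, j, j + 1}` and even `k` with `2j + 4 ≤ k ≤ 3j - 2`, the
greedy representation of `k` is `k = ((k - 2j - 2)/2)·2 + 2·(j + 1)` and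
`MinCost_S(k) = GreedyCost_S(k) = (k - 2j - 2)/2 + 2`. -/
theorem even_case_in_critical_range (j : ℕ) (hj : 6 ≤ j) (heven : Even j)
    (k : ℕ) (hkeven : Even k) (hlo : 2 * j + 4 ≤ k) (hhi : k ≤ 3 * j - 2) :
    IsGreedyRep ![2, j, j + 1] k ![(k - (2 * j + 2)) / 2, 0, 2] ∧
    minCost ![2, j, j + 1] k = (k - (2 * j + 2)) / 2 + 2 ∧
    greedyCost ![2, j, j + 1] k = (k - (2 * j + 2)) / 2 + 2 := by

  obtain ⟨d, hd⟩ := heven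
  obtain ⟨c, hc⟩ := hkeven
  set m := (k - (2 * j + 2)) / 2 with hm
  have hm2 : 2 * m + (2 * j + 2) = k := by omega
  have hrep : IsRep ![2, j, j + 1] k ![m, 0, 2] := by
    simp [IsRep, Fin.sum_univ_three]
    omega
  have hsum : ∑ i, (![m, 0, 2] : Fin 3 → ℕ) i = m + 2 := by
    simp [Fin.sum_univ_three]
  -- general bounds for an arbitrary representation
  have hbounds : ∀ b : Fin 3 → ℕ, IsRep ![2, j, j + 1] k b →
      b 0 * 2 + b 1 * j + b 2 * (j + 1) = k ∧ b 1 < 3 ∧ b 2 < 3 := by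
    intro b hb
    simp [IsRep, Fin.sum_univ_three] at hb
    refine ⟨hb, ?_, ?_⟩
    · have h1 : b 1 * j ≤ k := by
        calc b 1 * j ≤ b 0 * 2 + b 1 * j + b 2 * (j + 1) :=
          le_trans (Nat.le_add_left _ _) (Nat.le_add_right _ _)
        _ = k := hb
      have h2 : b 1 * j < 3 * j := lt_of_le_of_lt h1 (by omega)
      exact lt_of_mul_lt_mul_right h2 (Nat.zero_le _)
    · have h1 : b 2 * (j + 1) ≤ k := by
        calc b 2 * (j + 1) ≤ b 0 * 2 + b 1 * j + b 2 * (j + 1) := Nat.le_add_left _ _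
        _ = k := hb
      have h2 : b 2 * (j + 1) < 3 * (j + 1) := lt_of_le_of_lt h1 (by omega)
      exact lt_of_mul_lt_mul_right h2 (Nat.zero_le _)
  have hgr : IsGreedyRep ![2, j, j + 1] k ![m, 0, 2] := by
    refine ⟨hrep, ?_⟩
    intro b hb
    obtain ⟨heq, hb1, hb2⟩ := hbounds b hb
    by_cases h2 : b 2 = 2
    · -- then b 1 = 0 and b 0 = m
      have h1 : b 1 = 0 := by
        by_contra h1
        have hx : 1 * j ≤ b 1 * j := Nat.mul_le_mul_right _ (by omega)
        rw [h2] at heq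
        have hy : b 1 * j + 2 * (j + 1) ≤ k := by
          rw [← heq]
          exact Nat.add_le_add_right (Nat.le_add_left _ _) _
        have hh : k + 2 ≤ 3 * j := by omega
        linarith
      left
      have h0 : b 0 = m := by
        rw [h2, h1] at heq
        omega
      funext i
      fin_cases i <;> simp [h0, h1, h2]
    · right
      refine ⟨2, ?_, ?_⟩
      · simpa using (by omega : b 2 < 2)
      · intro i hi
        have := i.isLt
        rw [Fin.lt_def] at hi
        simp at hi
        omega
  have hcost_lb : ∀ b : Fin 3 → ℕ, IsRep ![2, j, j + 1] k b →
      m + 2 ≤ b 0 + b 1 + b 2 := by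
    intro b hb
    obtain ⟨heq, hb1, hb2⟩ := hbounds b hb
    have hd1 : j = 2 * d := by omega
    interval_cases (b 1) <;> interval_cases (b 2) <;> omega
  have hmem : (m + 2) ∈ {c | ∃ a, IsRep ![2, j, j + 1] k a ∧ ∑ i, a i = c} :=
    ⟨![m, 0, 2], hrep, hsum⟩
  have hmin : minCost ![2, j, j + 1] k = m + 2 := by
    apply le_antisymm (Nat.sInf_le hmem)
    apply le_csInf ⟨_, hmem⟩
    rintro c ⟨b, hb, rfl⟩
    have := hcost_lb b hb
    simpa [Fin.sum_univ_three] using this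
  have huniq : ∀ b, IsGreedyRep ![2, j, j + 1] k b → b = ![m, 0, 2] := by
    intro b hb
    rcases hgr.2 b hb.1 with h | ⟨i, hi1, hi2⟩
    · exact h
    rcases hb.2 ![m, 0, 2] hrep with h | ⟨i', hi'1, hi'2⟩
    · exact h.symm
    rcases lt_trichotomy i i' with hlt | heq | hgt
    · have := hi2 i' hlt
      omega
    · subst heq
      omega
    · have := hi'2 i hgt
      omega
  have hgmem : (m + 2) ∈ {c | ∃ a, IsGreedyRep ![2, j, j + 1] k a ∧ ∑ i, a i = c} :=
    ⟨![m, 0, 2], hgr, hsum⟩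
  have hgreedy : greedyCost ![2, j, j + 1] k = m + 2 := by
    apply le_antisymm (Nat.sInf_le hgmem)
    apply le_csInf ⟨_, hgmem⟩
    rintro c ⟨b, hb, rfl⟩
    rw [huniq b hb, hsum]
  exact ⟨hgr, hmin, hgreedy⟩
end

section
/- Let S = {s_1, …, s_t} be a finite set of integers with 1 < s_1 < s_2 < … < s_t and gcd(s_1, …, s_t) = 1. If S has a counterexample, then the smallest counterexample for S is a witness for S. -/
open Finset

lemma greedyCost_zero {t : ℕ} (s : Fin t → ℕ) (hone : ∀ i, 1 < s i) :
    greedyCost s 0 = 0 := by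
  have h0 : IsGreedyRep s 0 (fun _ => 0) := by
    constructor
    · simp [IsRep]
    · intro b hb
      left
      funext j
      have hb' : ∑ i, b i * s i = 0 := hb
      have : b j * s j = 0 := by
        have := Finset.sum_eq_zero_iff.mp hb' j (Finset.mem_univ j)
        exact this
      have hs : s j ≠ 0 := Nat.pos_iff_ne_zero.mp (lt_trans one_pos (hone j))
      rcases Nat.mul_eq_zero.mp this with h | h
      · exact h
      · exact absurd h hs
  have : (0 : ℕ) ∈ {c | ∃ a, IsGreedyRep s 0 a ∧ ∑ i, a i = c} :=
    ⟨fun _ => 0, h0, by simp⟩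
  exact Nat.sInf_eq_zero.mpr (Or.inl this)


/-- If `S` has a counterexample, then the smallest counterexample for `S` is a witness
for `S`. -/
theorem smallest_counterexample_is_witness {t : ℕ} (s : Fin t → ℕ)
    (hmono : StrictMono s) (hone : ∀ i, 1 < s i) (hgcd : Finset.univ.gcd s = 1)
    (k : ℕ) (hk : IsCounterexample s k)
    (hmin : ∀ k' : ℕ, IsCounterexample s k' → k ≤ k') :
    IsWitness s k := by
  obtain ⟨hk0, hrep, hlt⟩ := hk
  have hne : {c | ∃ a, IsRep s k a ∧ ∑ i, a i = c}.Nonempty := by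
    obtain ⟨a, ha⟩ := hrep
    exact ⟨∑ i, a i, a, ha, rfl⟩
  obtain ⟨a, ha, hcost⟩ : ∃ a, IsRep s k a ∧ ∑ i, a i = minCost s k := Nat.sInf_mem hne
  clear hne
  have hex : ∃ i, 0 < a i := by
    by_contra h
    push_neg at h
    have hz : ∀ i, a i = 0 := fun i => Nat.le_zero.mp (h i)
    have h0 : (0 : ℕ) = k := by
      have h' := ha
      unfold IsRep at h'
      simpa [hz] using h'
    omega
  obtain ⟨i, hi⟩ := hex
  have hsk : a i * s i + ∑ x ∈ Finset.univ.erase i, a x * s x = ∑ x, a x * s x :=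
    Finset.add_sum_erase _ (fun j => a j * s j) (Finset.mem_univ i)
  have hak : ∑ x, a x * s x = k := ha
  have hsipos : 0 < s i := lt_trans one_pos (hone i)
  have hmul : s i ≤ a i * s i := Nat.le_mul_of_pos_left _ hi
  have hsi : s i ≤ k := by omega
  set b := Function.update a i (a i - 1) with hb
  have hbi : b i = a i - 1 := by rw [hb, Function.update_self]
  have hbrest : ∀ j ∈ Finset.univ.erase i, b j * s j = a j * s j := by
    intro j hj
    rw [hb, Function.update_of_ne (Finset.mem_erase.mp hj).1]
  have hbrep : IsRep s (k - s i) b := by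
    unfold IsRep
    have e1 : b i * s i + ∑ x ∈ Finset.univ.erase i, b x * s x = ∑ x, b x * s x :=
      Finset.add_sum_erase _ (fun j => b j * s j) (Finset.mem_univ i)
    have e3 : ∑ x ∈ Finset.univ.erase i, b x * s x = ∑ x ∈ Finset.univ.erase i, a x * s x :=
      Finset.sum_congr rfl hbrest
    have e4 : b i * s i = a i * s i - s i := by rw [hbi, Nat.sub_one_mul]
    omega
  have hbcost : ∑ x, b x + 1 = ∑ x, a x := by
    have e1 : b i + ∑ x ∈ Finset.univ.erase i, b x = ∑ x, b x :=
      Finset.add_sum_erase _ b (Finset.mem_univ i)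
    have e2 : a i + ∑ x ∈ Finset.univ.erase i, a x = ∑ x, a x :=
      Finset.add_sum_erase _ a (Finset.mem_univ i)
    have e3 : ∑ x ∈ Finset.univ.erase i, b x = ∑ x ∈ Finset.univ.erase i, a x :=
      Finset.sum_congr rfl (fun j hj => by
        rw [hb, Function.update_of_ne (Finset.mem_erase.mp hj).1])
    omega
  have hmmin : minCost s (k - s i) ≤ ∑ x, b x :=
    Nat.sInf_le ⟨b, hbrep, rfl⟩
  have h1 : 1 ≤ minCost s k := by
    rcases Nat.eq_zero_or_pos (minCost s k) with h | h
    · exfalso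
      have hz : ∀ j, a j = 0 := fun j =>
        Finset.sum_eq_zero_iff.mp (hcost.trans h) j (Finset.mem_univ j)
      have h0 : (0 : ℕ) = k := by
        have h' := ha
        unfold IsRep at h'
        simpa [hz] using h'
      omega
    · exact h
  have hmlt : k - s i < k := Nat.sub_lt hk0 hsipos
  have hg : greedyCost s (k - s i) + 1 ≤ minCost s k := by
    rcases Nat.eq_zero_or_pos (k - s i) with h0 | h0
    · rw [h0, greedyCost_zero s hone]
      omega
    · have hnc : ¬ IsCounterexample s (k - s i) := fun hc => by
        have := hmin _ hc
        omega
      unfold IsCounterexample at hnc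
      push_neg at hnc
      have := hnc h0 ⟨b, hbrep⟩
      omega
  exact ⟨hk0, hrep, i, hsi, ⟨b, hbrep⟩, by omega⟩
end

section
/- For every integer n ≥ 2 with gcd(n, n+1, n+2) = 1 (which holds for all n ≥ 2), the set S = {n, n+1, n+2} is greedy: for every k in the numerical semigroup ⟨n, n+1, n+2⟩ with k > 0, GreedyCost_S(k) = MinCost_S(k). -/
open Finset

/-- The set `S = {n, n+1, n+2}` is greedy for every `n ≥ 2` (and `gcd(n, n+1, n+2) = 1`
holds automatically): for every representable `k > 0`,
`GreedyCost_S(k) = MinCost_S(k)`. -/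
theorem three_consecutive_generators_greedy (n : ℕ) (hn : 2 ≤ n)
    (hgcd : Nat.gcd n (Nat.gcd (n + 1) (n + 2)) = 1)
    (k : ℕ) (hk : 0 < k) (hrep : Representable ![n, n + 1, n + 2] k) :
    greedyCost ![n, n + 1, n + 2] k = minCost ![n, n + 1, n + 2] k := by
  set s : Fin 3 → ℕ := ![n, n + 1, n + 2] with hs
  clear_value s
  have hM : {c | ∃ a, IsRep s k a ∧ ∑ i, a i = c}.Nonempty := by
    obtain ⟨a, ha⟩ := hrep
    exact ⟨∑ i, a i, a, ha, rfl⟩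
  set m : ℕ := sInf {c | ∃ a, IsRep s k a ∧ ∑ i, a i = c} with hm
  clear_value m
  have hmem : m ∈ {c | ∃ a, IsRep s k a ∧ ∑ i, a i = c} := hm ▸ Nat.sInf_mem hM
  obtain ⟨a, ha, hsuma⟩ := hmem
  have hak : a 0 * n + a 1 * (n + 1) + a 2 * (n + 2) = k := by
    have h := ha
    unfold IsRep at h
    rw [Fin.sum_univ_three] at h
    simpa [hs] using h
  have hsa : a 0 + a 1 + a 2 = m := by
    rw [Fin.sum_univ_three] at hsuma; exact hsuma
  obtain ⟨r, hr⟩ : ∃ r, r = a 1 + 2 * a 2 := ⟨_, rfl⟩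
  have hkmr : k = m * n + r := by rw [← hak, ← hsa, hr]; ring
  have hr2m : r ≤ 2 * m := by clear * - hr hsa; omega
  obtain ⟨d, hd⟩ : ∃ d, d = r / 2 := ⟨_, rfl⟩
  obtain ⟨e, he⟩ : ∃ e, e = r % 2 := ⟨_, rfl⟩
  have hde : 2 * d + e = r := by clear * - hd he; omega
  have he2 : e < 2 := by clear * - he; omega
  have hdem : d + e ≤ m := by clear * - hd he hr2m; omega
  set g : Fin 3 → ℕ := ![m - (d + e), e, d] with hgdef
  clear_value g
  have hg0 : (m - (d + e)) + d + e = m := by clear * - hdem; omega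
  have hgval : g 0 = m - (d + e) ∧ g 1 = e ∧ g 2 = d := by
    refine ⟨?_, ?_, ?_⟩ <;> simp [hgdef]
  have hgk : (m - (d + e)) * n + e * (n + 1) + d * (n + 2) = k := by
    have h1 : (m - (d + e)) * n + e * (n + 1) + d * (n + 2)
        = ((m - (d + e)) + d + e) * n + (2 * d + e) := by ring
    rw [h1, hg0, hde, ← hkmr]
  have hgrep : IsRep s k g := by
    unfold IsRep
    rw [Fin.sum_univ_three]
    simpa [hgdef, hs] using hgk
  have hgreedy : ∀ b, IsRep s k b → b = g ∨ ∃ i, b i < g i ∧ ∀ j, i < j → b j = g j := by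
    intro b hb
    have hbk : b 0 * n + b 1 * (n + 1) + b 2 * (n + 2) = k := by
      have h := hb
      unfold IsRep at h
      rw [Fin.sum_univ_three] at h
      simpa [hs] using h
    have hble : m ≤ b 0 + b 1 + b 2 := by
      rw [hm]
      exact Nat.sInf_le ⟨b, hb, by rw [Fin.sum_univ_three]⟩
    have hbk2 : k = (b 0 + b 1 + b 2) * n + (b 1 + 2 * b 2) := by rw [← hbk]; ring
    have hmono : m * n ≤ (b 0 + b 1 + b 2) * n := Nat.mul_le_mul_right _ hble
    have hkey : b 1 + 2 * b 2 ≤ r := by clear * - hbk2 hkmr hmono; omega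
    by_cases h2 : b 2 = d
    · by_cases h1 : b 1 = e
      · left
        rw [h1, h2] at hbk
        have heq : b 0 * n + e * (n + 1) + d * (n + 2)
            = (m - (d + e)) * n + e * (n + 1) + d * (n + 2) := hbk.trans hgk.symm
        have heq2 : b 0 * n = (m - (d + e)) * n :=
          Nat.add_right_cancel (Nat.add_right_cancel heq)
        have h0 : b 0 = m - (d + e) := Nat.eq_of_mul_eq_mul_right (by clear * - hn; omega) heq2
        funext i
        fin_cases i
        · simpa [hgdef] using h0
        · simpa [hgdef] using h1
        · simpa [hgdef] using h2
      · right
        refine ⟨1, ?_, ?_⟩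
        · have hlt : b 1 < e := by clear * - hkey hde he2 h1 h2; omega
          have hg1 : g 1 = e := hgval.2.1
          rw [hg1]; exact hlt
        · intro j hj
          fin_cases j
          · exact absurd hj (by decide)
          · exact absurd hj (by decide)
          · show b 2 = g 2
            rw [hgval.2.2]; exact h2
    · right
      refine ⟨2, ?_, ?_⟩
      · have hlt : b 2 < d := by clear * - hkey hde he2 h2; omega
        have hg2 : g 2 = d := hgval.2.2
        rw [hg2]; exact hlt
      · intro j hj
        fin_cases j
        · exact absurd hj (by decide)
        · exact absurd hj (by decide)
        · exact absurd hj (by decide)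
  have hgg : IsGreedyRep s k g := ⟨hgrep, hgreedy⟩
  have hgsum : ∑ i, g i = m := by
    rw [Fin.sum_univ_three]
    clear * - hgval hg0
    omega
  have huniq : ∀ a', IsGreedyRep s k a' → a' = g := by
    rintro a' ⟨ha'rep, ha'max⟩
    rcases hgreedy a' ha'rep with h | ⟨i, hi, hup⟩
    · exact h
    · rcases ha'max g hgrep with h' | ⟨i', hi', hup'⟩
      · exact absurd (h' ▸ hi) (lt_irrefl _)
      · exfalso
        rcases lt_trichotomy i i' with hlt | heq | hgt
        · have hx := hup i' hlt
          clear * - hx hi'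
          omega
        · subst heq
          clear * - hi hi'
          omega
        · have hx := hup' i hgt
          clear * - hx hi
          omega
  have hset : {c | ∃ a, IsGreedyRep s k a ∧ ∑ i, a i = c} = {m} := by
    ext c
    simp only [Set.mem_setOf_eq, Set.mem_singleton_iff]
    constructor
    · rintro ⟨a', h1, h2⟩
      rw [huniq a' h1] at h2
      rw [← h2, hgsum]
    · rintro rfl
      exact ⟨g, hgg, hgsum⟩
  have hfin : greedyCost s k = m := by
    unfold greedyCost
    rw [hset]
    exact csInf_singleton m
  rw [hfin, hm]
  rfl
end
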